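/- arXiv:2110.09403 — 3 statements merged into one kernel-verified Lean document; each statement's English description precedes it below -/
import Mathlib

section
/- Fix ε ∈ (0,1), a positive integer f, and δ ∈ (0,1) with f·δ < 1, and let p = p(n) = n^{-δ}. Then with high probability as n → ∞, the random bipartite graph G(n,n,p) with parts A, B satisfies: for every subset X ⊆ A with |X| ≥ εn and every collection of pairwise disjoint non-empty subsets Y₁,…,Y_k ⊆ B with k ≥ εn and each |Y_j| ≤ f, there exist x ∈ X and j ∈ [k] such that x is adjacent to every vertex of Y_j (and symmetrically with the roles of A and B swapped). -/
/-!
Union bound. If the one-sided property fails, it already fails for some `X` of size exactly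
`m = ⌈εn⌉` together with `m` of the sets `Y_j`. Such a configuration is recorded by `X` and a
partial colouring `g : B → Option (Fin m)` whose colour classes are the chosen `Y_j`, so there
are at most `2ⁿ (m + 1)ⁿ` of them. For a fixed configuration the `m²` events "`x` is not
complete to `Y_j`" concern pairwise disjoint sets of edges, hence are independent, and each has
probability `1 - p ^ |Y_j| ≤ 1 - p ^ f`. The failure probability is therefore at most
`2 · 2ⁿ (m + 1)ⁿ exp (-p ^ f m²) ≤ 2 exp (n log 4n - ε² n ^ (2 - fδ))`, which tends to `0`
because `fδ < 1`.
-/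

open MeasureTheory
open scoped ENNReal

/-- `(n : ℝ) ^ (-δ) ≤ 1` as an extended nonnegative real, for `δ > 0`. -/
theorem ofReal_rpow_neg_le_one (n : ℕ) (δ : ℝ) (hδ : 0 < δ) :
    ENNReal.ofReal ((n : ℝ) ^ (-δ)) ≤ 1 := by
  rcases Nat.eq_zero_or_pos n with h | h
  · subst h
    simp [Real.zero_rpow (neg_ne_zero.mpr hδ.ne')]
  · refine ENNReal.ofReal_le_one.mpr ?_
    exact Real.rpow_le_one_of_one_le_of_nonpos (by exact_mod_cast h) (by linarith)

/-- The bipartite Erdős–Rényi random graph `G(n,n,p)`: the product Bernoulli(p) measure on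
indicators of the `n × n` possible edges between the two parts. -/
noncomputable def bipMeasure (n : ℕ) (p : ℝ≥0∞) (hp : p ≤ 1) :
    Measure (Fin n × Fin n → Bool) :=
  Measure.pi fun _ => (PMF.bernoulli p.toNNReal (by simpa using ENNReal.toNNReal_mono ENNReal.one_ne_top hp)).toMeasure

/-- The good event: for every `X ⊆ A` with `|X| ≥ εn` and every collection of `k ≥ εn`
pairwise disjoint nonempty subsets `Y₁, …, Y_k ⊆ B` each of size at most `f`, some `x ∈ X`
is adjacent to all of some `Y_j`; and symmetrically with the parts swapped. -/
def GoodEvent (n : ℕ) (ε : ℝ) (f : ℕ) (ω : Fin n × Fin n → Bool) : Prop :=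
  (∀ X : Finset (Fin n), ε * n ≤ (X.card : ℝ) →
    ∀ k : ℕ, ε * n ≤ (k : ℝ) → ∀ Y : Fin k → Finset (Fin n),
      (∀ j, (Y j).Nonempty) → Pairwise (Function.onFun Disjoint Y) →
      (∀ j, (Y j).card ≤ f) →
      ∃ x ∈ X, ∃ j : Fin k, ∀ y ∈ Y j, ω (x, y) = true) ∧
  (∀ X : Finset (Fin n), ε * n ≤ (X.card : ℝ) →
    ∀ k : ℕ, ε * n ≤ (k : ℝ) → ∀ Y : Fin k → Finset (Fin n),
      (∀ j, (Y j).Nonempty) → Pairwise (Function.onFun Disjoint Y) →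
      (∀ j, (Y j).card ≤ f) →
      ∃ x ∈ X, ∃ j : Fin k, ∀ y ∈ Y j, ω (y, x) = true)

open MeasureTheory ProbabilityTheory Finset Filter Real Asymptotics Topology
open scoped NNReal

theorem ProbabilityTheory.iIndep.measure_biInter_eq_prod_of_pairwiseDisjoint
    {Ω ι τ : Type*} {mΩ : MeasurableSpace Ω} {μ : Measure Ω} [IsProbabilityMeasure μ]
    {m : ι → MeasurableSpace Ω} (h_le : ∀ i, m i ≤ mΩ) (h_ind : iIndep m μ)
    {S : τ → Set ι} {A : τ → Set Ω} {T : Finset τ} (hS : (T : Set τ).PairwiseDisjoint S)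
    (hA : ∀ t ∈ T, MeasurableSet[⨆ i ∈ S t, m i] (A t)) :
    μ (⋂ t ∈ T, A t) = ∏ t ∈ T, μ (A t) := by
  classical
  induction T using Finset.induction_on with
  | empty => simp
  | insert a T ha ih =>
    have hdisj : Disjoint (S a) (⋃ t ∈ T, S t) :=
      Set.disjoint_iUnion₂_right.2 fun t ht =>
        hS (by simp) (by simp [ht]) fun hat => ha (hat ▸ ht)
    have hmeas : MeasurableSet[⨆ i ∈ ⋃ t ∈ T, S t, m i] (⋂ t ∈ T, A t) :=
      Finset.measurableSet_biInter T fun t ht =>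
        MeasurableSpace.le_def.1 (biSup_mono (Finset.subset_set_biUnion_of_mem ht)) _
          (hA t (mem_insert_of_mem ht))
    rw [Finset.set_biInter_insert, prod_insert ha,
      ← ih (hS.subset (by simp)) fun t ht => hA t (mem_insert_of_mem ht)]
    exact (Indep_iff _ _ μ).1 (indep_iSup_of_disjoint h_le h_ind hdisj) _ _
      (hA a (mem_insert_self a T)) hmeas

theorem tendsto_measure_of_tendsto_measure_compl {ι : Type*} {Ω : ι → Type*}
    {mΩ : ∀ i, MeasurableSpace (Ω i)} {l : Filter ι} {μ : ∀ i, Measure (Ω i)}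
    [∀ i, IsProbabilityMeasure (μ i)] {s : ∀ i, Set (Ω i)}
    (hs : ∀ i, MeasurableSet (s i)) (h : Tendsto (fun i => μ i (s i)ᶜ) l (𝓝 0)) :
    Tendsto (fun i => μ i (s i)) l (𝓝 1) := by
  simpa [prob_compl_eq_one_sub (hs _), ENNReal.sub_sub_cancel ENNReal.one_ne_top prob_le_one]
    using ENNReal.Tendsto.sub tendsto_const_nhds h (Or.inl ENNReal.one_ne_top)

namespace MeasureTheory.Measure

variable {ι τ : Type*} [Fintype ι] {ν : Measure Bool} [IsProbabilityMeasure ν]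

theorem iIndepFun_eval_pi : iIndepFun (fun i (ω : ι → Bool) => ω i) (Measure.pi fun _ => ν) :=
  iIndepFun_pi (X := fun _ => id) fun _ => aemeasurable_id

theorem pi_forall_eq_true (S : Finset ι) :
    Measure.pi (fun _ => ν) {ω : ι → Bool | ∀ i ∈ S, ω i = true} = ν {true} ^ #S := by
  have hset : {ω : ι → Bool | ∀ i ∈ S, ω i = true} = ⋂ i ∈ S, (fun ω => ω i) ⁻¹' {true} := by
    ext; simp
  rw [hset, iIndepFun_eval_pi.meas_biInter fun i _ => ⟨{true}, measurableSet_singleton true, rfl⟩,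
    ← prod_const]
  exact prod_congr rfl fun i _ => (measurePreserving_eval (fun _ : ι => ν) i).measure_preimage
    (measurableSet_singleton true).nullMeasurableSet

theorem pi_forall_exists_false_le {T : Finset τ} {S : τ → Finset ι}
    (hS : (T : Set τ).PairwiseDisjoint S) {f : ℕ} (hf : ∀ t ∈ T, #(S t) ≤ f) :
    Measure.pi (fun _ => ν) {ω : ι → Bool | ∀ t ∈ T, ∃ i ∈ S t, ω i = false}
      ≤ (1 - ν {true} ^ f) ^ #T := by
  have hblock : ∀ t, {ω : ι → Bool | ∃ i ∈ S t, ω i = false}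
      = {ω | ∀ i ∈ S t, ω i = true}ᶜ := fun t => by ext; simp
  have hmeas : ∀ t, MeasurableSet[⨆ i ∈ (S t : Set ι),
      MeasurableSpace.comap (fun ω : ι → Bool => ω i) inferInstance]
      {ω : ι → Bool | ∃ i ∈ S t, ω i = false} := fun t => by
    have hunion : {ω : ι → Bool | ∃ i ∈ S t, ω i = false}
        = ⋃ i ∈ S t, (fun ω => ω i) ⁻¹' {false} := by
      ext; simp
    rw [hunion]
    exact Finset.measurableSet_biUnion _ fun i hi => MeasurableSpace.le_def.1
      (le_iSup₂ (f := fun i (_ : i ∈ (S t : Set ι)) =>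
        MeasurableSpace.comap (fun ω : ι → Bool => ω i) inferInstance) i hi)
      _ ⟨{false}, measurableSet_singleton false, rfl⟩
  calc Measure.pi (fun _ => ν) {ω : ι → Bool | ∀ t ∈ T, ∃ i ∈ S t, ω i = false}
      = Measure.pi (fun _ => ν) (⋂ t ∈ T, {ω : ι → Bool | ∃ i ∈ S t, ω i = false}) := by
        congr 1; ext; simp
    _ = ∏ t ∈ T, Measure.pi (fun _ => ν) {ω : ι → Bool | ∃ i ∈ S t, ω i = false} :=
        iIndepFun_eval_pi.iIndep.measure_biInter_eq_prod_of_pairwiseDisjoint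
          (fun i => (measurable_pi_apply i).comap_le)
          (fun a ha b hb hab => Finset.disjoint_coe.2 (hS ha hb hab)) fun t _ => hmeas t
    _ = ∏ t ∈ T, (1 - ν {true} ^ #(S t)) := prod_congr rfl fun t _ => by
        rw [hblock, prob_compl_eq_one_sub MeasurableSet.of_discrete, pi_forall_eq_true]
    _ ≤ ∏ t ∈ T, (1 - ν {true} ^ f) := prod_le_prod' fun t ht =>
        tsub_le_tsub_left (pow_le_pow_of_le_one zero_le prob_le_one (hf t ht)) 1
    _ = (1 - ν {true} ^ f) ^ #T := prod_const _

end MeasureTheory.Measure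

section Bipartite

variable {α β κ : Type*}

def OneSidedGood (s : ℝ) (f : ℕ) (ω : α × β → Bool) : Prop :=
  ∀ X : Finset α, s ≤ (#X : ℝ) →
    ∀ k : ℕ, s ≤ (k : ℝ) → ∀ Y : Fin k → Finset β,
      (∀ j, (Y j).Nonempty) → Pairwise (Function.onFun Disjoint Y) →
      (∀ j, #(Y j) ≤ f) →
      ∃ x ∈ X, ∃ j : Fin k, ∀ y ∈ Y j, ω (x, y) = true

theorem goodEvent_iff {n : ℕ} {ε : ℝ} {f : ℕ} {ω : Fin n × Fin n → Bool} :
    GoodEvent n ε f ω ↔ OneSidedGood (ε * n) f ω ∧ OneSidedGood (ε * n) f (ω ∘ Prod.swap) :=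
  Iff.rfl

/-- The colour classes of `g` stand for the sets `Y_j`. -/
def BlockedBy (X : Finset α) (g : β → Option κ) : Set (α × β → Bool) :=
  {ω | ∀ x ∈ X, ∀ j, ∃ y, g y = some j ∧ ω (x, y) = false}

theorem Pairwise.exists_eq_some_iff_mem {Y : κ → Finset β}
    (hY : Pairwise (Function.onFun Disjoint Y)) :
    ∃ g : β → Option κ, ∀ y j, g y = some j ↔ y ∈ Y j := by
  classical
  refine ⟨fun y => if h : ∃ j, y ∈ Y j then some h.choose else none, fun y j => ?_⟩
  by_cases h : ∃ j, y ∈ Y j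
  · dsimp only
    rw [dif_pos h, Option.some_inj]
    refine ⟨fun hj => hj ▸ h.choose_spec, fun hy => ?_⟩
    by_contra hne
    exact disjoint_left.1 (hY hne) h.choose_spec hy
  · simp only [dif_neg h, reduceCtorEq, false_iff]
    exact fun hy => h ⟨j, hy⟩

theorem not_oneSidedGood_subset [Fintype α] [Fintype β] [DecidableEq β] (s : ℝ) (f : ℕ) :
    {ω : α × β → Bool | ¬ OneSidedGood s f ω} ⊆
      ⋃ X ∈ powersetCard ⌈s⌉₊ univ,
        ⋃ g ∈ ({g | ∀ j, #{y | g y = some j} ≤ f} : Finset (β → Option (Fin ⌈s⌉₊))),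
          BlockedBy X g := by
  intro ω hω
  simp only [OneSidedGood, Set.mem_ofPred_eq] at hω
  push Not at hω
  obtain ⟨X₀, hX₀, k, hk, Y, -, hY, hYf, hmiss⟩ := hω
  have hmk : ⌈s⌉₊ ≤ k := Nat.ceil_le.2 hk
  obtain ⟨X, hXX₀, hX⟩ := exists_subset_card_eq (Nat.ceil_le.2 hX₀)
  obtain ⟨g, hg⟩ :=
    Pairwise.exists_eq_some_iff_mem (hY.comp_of_injective (Fin.castLE_injective hmk))
  have hfiber : ∀ j, ({y | g y = some j} : Finset β) = Y (Fin.castLE hmk j) := fun j => by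
    ext y; simp [hg]
  simp only [Set.mem_iUnion, mem_powersetCard, mem_filter, mem_univ, true_and, exists_prop]
  refine ⟨X, ⟨subset_univ X, hX⟩, g, fun j => hfiber j ▸ hYf _, fun x hx j => ?_⟩
  obtain ⟨y, hy, hxy⟩ := hmiss x (hXX₀ hx) (Fin.castLE hmk j)
  exact ⟨y, (hg y j).2 hy, by simpa using hxy⟩

variable [Fintype α] [Fintype β] {ν : Measure Bool} [IsProbabilityMeasure ν]

theorem pi_blockedBy_le [Fintype κ] [DecidableEq κ] (X : Finset α) (g : β → Option κ) {f : ℕ}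
    (hg : ∀ j, #{y | g y = some j} ≤ f) :
    Measure.pi (fun _ => ν) (BlockedBy X g) ≤ (1 - ν {true} ^ f) ^ (#X * Fintype.card κ) := by
  set S : α × κ → Finset (α × β) := fun t => ({y | g y = some t.2} : Finset β).map
    (Function.Embedding.sectR t.1 β)
  have hset : BlockedBy X g = {ω | ∀ t ∈ X ×ˢ univ, ∃ i ∈ S t, ω i = false} := by
    ext ω; simp [BlockedBy, S, forall_comm (α := κ)]
  have hS : ((X ×ˢ univ : Finset (α × κ)) : Set (α × κ)).PairwiseDisjoint S := by
    rintro ⟨x, j⟩ - ⟨x', j'⟩ - hne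
    simp only [Function.onFun, disjoint_left, S, Finset.mem_map, mem_filter, mem_univ, true_and]
    rintro _ ⟨y, hy, rfl⟩ ⟨y', hy', heq⟩
    simp only [Function.Embedding.sectR_apply, Prod.mk.injEq] at heq
    obtain ⟨rfl, rfl⟩ := heq
    exact hne (by rw [Option.some_inj.1 (hy.symm.trans hy')])
  rw [hset, ← card_univ, ← card_product]
  exact Measure.pi_forall_exists_false_le hS fun t _ => (card_map _).trans_le (hg t.2)

theorem pi_not_oneSidedGood_le [DecidableEq β] (s : ℝ) (f : ℕ) :
    Measure.pi (fun _ => ν) {ω : α × β → Bool | ¬ OneSidedGood s f ω}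
      ≤ (2 ^ Fintype.card α * (⌈s⌉₊ + 1) ^ Fintype.card β : ℕ)
        * (1 - ν {true} ^ f) ^ (⌈s⌉₊ * ⌈s⌉₊) := by
  set m := ⌈s⌉₊
  set G : Finset (β → Option (Fin m)) := {g | ∀ j, #{y | g y = some j} ≤ f}
  have hcount : #(powersetCard m (univ : Finset α)) * #G
      ≤ 2 ^ Fintype.card α * (m + 1) ^ Fintype.card β := by
    gcongr
    · rw [card_powersetCard, card_univ]
      exact Nat.choose_le_two_pow _ _
    · exact (card_filter_le _ _).trans_eq (by simp)
  calc Measure.pi (fun _ => ν) {ω : α × β → Bool | ¬ OneSidedGood s f ω}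
      ≤ ∑ X ∈ powersetCard m univ, ∑ g ∈ G, Measure.pi (fun _ => ν) (BlockedBy X g) :=
        (measure_mono (not_oneSidedGood_subset s f)).trans <| (measure_biUnion_finset_le _ _).trans
          (sum_le_sum fun X _ => measure_biUnion_finset_le _ _)
    _ ≤ ∑ X ∈ powersetCard m univ, ∑ g ∈ G, (1 - ν {true} ^ f) ^ (m * m) := by
        gcongr with X hX g hg
        exact (pi_blockedBy_le X g (mem_filter.1 hg).2).trans_eq
          (by rw [(mem_powersetCard.1 hX).2, Fintype.card_fin])
    _ ≤ _ := by
        simp only [sum_const, nsmul_eq_mul, ← mul_assoc]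
        gcongr
        exact_mod_cast hcount

theorem pi_preimage_comp_swap {ν : Measure Bool} [SigmaFinite ν] (s : Set (β × α → Bool)) :
    Measure.pi (fun _ => ν) ((· ∘ Prod.swap) ⁻¹' s) = Measure.pi (fun _ => ν) s :=
  (measurePreserving_arrowCongr' (fun _ => ν) (fun _ => ν) (Equiv.prodComm α β)
    (MeasurableEquiv.refl Bool) fun _ => MeasurePreserving.id ν).measure_preimage
    MeasurableSet.of_discrete.nullMeasurableSet

end Bipartite

theorem PMF.toMeasure_bernoulli_true (p : ℝ≥0) (h : p ≤ 1) :
    (PMF.bernoulli p h).toMeasure {true} = p := by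
  rw [toMeasure_apply_singleton _ _ (measurableSet_singleton _), bernoulli_apply, cond_true]

instance (n : ℕ) (p : ℝ≥0∞) (hp : p ≤ 1) : IsProbabilityMeasure (bipMeasure n p hp) := by
  unfold bipMeasure; infer_instance

theorem bipMeasure_not_goodEvent_le (n f : ℕ) (ε : ℝ) (p : ℝ≥0∞) (hp : p ≤ 1) :
    bipMeasure n p hp {ω | GoodEvent n ε f ω}ᶜ
      ≤ 2 * ((2 ^ n * (⌈ε * n⌉₊ + 1) ^ n : ℕ) * (1 - p ^ f) ^ (⌈ε * n⌉₊ * ⌈ε * n⌉₊)) := by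
  have hsub : {ω | GoodEvent n ε f ω}ᶜ ⊆ {ω | ¬ OneSidedGood (ε * n) f ω}
      ∪ (· ∘ Prod.swap) ⁻¹' {ω | ¬ OneSidedGood (ε * n) f ω} :=
    fun ω hω => not_and_or.1 (goodEvent_iff.not.1 hω)
  calc bipMeasure n p hp {ω | GoodEvent n ε f ω}ᶜ
      ≤ 2 * bipMeasure n p hp {ω | ¬ OneSidedGood (ε * n) f ω} := by
        refine (measure_mono hsub).trans ((measure_union_le _ _).trans_eq ?_)
        rw [bipMeasure, pi_preimage_comp_swap, two_mul]
    _ ≤ _ := by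
        gcongr
        rw [bipMeasure]
        refine (pi_not_oneSidedGood_le (ε * n) f).trans_eq ?_
        -- `erw`: the bound `p.toNNReal ≤ 1` inside `bipMeasure` is stated as `≤ toNNReal 1`
        erw [PMF.toMeasure_bernoulli_true]
        rw [ENNReal.coe_toNNReal (hp.trans_lt ENNReal.one_lt_top).ne, Fintype.card_fin]

theorem ENNReal.one_sub_ofReal_pow_le {r : ℝ} (hr : 0 ≤ r) (k : ℕ) :
    (1 - ENNReal.ofReal r) ^ k ≤ ENNReal.ofReal (Real.exp (-(k * r))) := by
  calc (1 - ENNReal.ofReal r) ^ k = ENNReal.ofReal (1 - r) ^ k := by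
        rw [ENNReal.ofReal_sub _ hr, ENNReal.ofReal_one]
    _ ≤ ENNReal.ofReal (Real.exp (-r)) ^ k := by
        gcongr
        exact Real.one_sub_le_exp_neg r
    _ = ENNReal.ofReal (Real.exp (-(k * r))) := by
        rw [← ENNReal.ofReal_pow (Real.exp_pos _).le, ← Real.exp_nat_mul, mul_neg]

theorem bipMeasure_ofReal_not_goodEvent_le (n f : ℕ) (ε : ℝ) {r : ℝ} (hr : 0 ≤ r)
    (hr1 : ENNReal.ofReal r ≤ 1) :
    bipMeasure n (ENNReal.ofReal r) hr1 {ω | GoodEvent n ε f ω}ᶜ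
      ≤ ENNReal.ofReal (2 * (((2 ^ n * (⌈ε * n⌉₊ + 1) ^ n : ℕ) : ℝ) *
          Real.exp (-((⌈ε * n⌉₊ * ⌈ε * n⌉₊ : ℕ) * r ^ f)))) := by
  refine (bipMeasure_not_goodEvent_le n f ε _ hr1).trans ?_
  rw [← ENNReal.ofReal_pow hr, ENNReal.ofReal_mul (by norm_num), ENNReal.ofReal_mul (by positivity),
    ENNReal.ofReal_natCast, ENNReal.ofReal_ofNat]
  gcongr
  exact ENNReal.one_sub_ofReal_pow_le (by positivity) _

theorem tendsto_mul_log_sub_rpow_atBot {K a c : ℝ} (hK : 0 < K) (ha : 0 < a) (hc : 1 < c) :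
    Tendsto (fun x => x * log (K * x) - a * x ^ c) atTop atBot := by
  have hc' : 0 < c - 1 := by linarith
  have hlog : (fun x => log (K * x)) =o[atTop] fun x => x ^ (c - 1) := by
    have hconst : (fun _ => log K) =o[atTop] fun x : ℝ => x ^ (c - 1) :=
      isLittleO_const_left.2 (Or.inr (tendsto_norm_atTop_atTop.comp (tendsto_rpow_atTop hc')))
    refine (hconst.add (isLittleO_log_rpow_atTop hc')).congr' ?_ EventuallyEq.rfl
    filter_upwards [eventually_gt_atTop 0] with x hx
    exact (log_mul hK.ne' hx.ne').symm
  have hmain : (fun x => x * log (K * x)) =o[atTop] fun x => -(a * x ^ c) := by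
    refine ((isBigO_refl (fun x : ℝ => x) atTop).mul_isLittleO hlog).trans_isBigO ?_
    refine (isBigO_const_mul_self (-a)⁻¹ (fun x => -(a * x ^ c)) atTop).congr' ?_ EventuallyEq.rfl
    filter_upwards [eventually_gt_atTop 0] with x hx
    rw [← rpow_one_add' hx.le (by linarith), add_sub_cancel]
    field_simp
  have hequiv : (fun x => x * log (K * x) - a * x ^ c) ~[atTop] fun x => -(a * x ^ c) := by
    refine ((IsEquivalent.refl (u := fun x => -(a * x ^ c))).add_isLittleO hmain).congr_left ?_
    exact Eventually.of_forall fun x => by simp only [Pi.add_apply]; ring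
  exact hequiv.symm.tendsto_atBot (tendsto_neg_atTop_atBot.comp
    ((tendsto_rpow_atTop (by linarith)).const_mul_atTop ha))

theorem sq_mul_rpow_two_sub_le {ε δ : ℝ} (hε : 0 < ε) {n m f : ℕ} (hn : 0 < n)
    (hm : ε * n ≤ m) :
    ε ^ 2 * (n : ℝ) ^ (2 - f * δ) ≤ (m * m : ℕ) * ((n : ℝ) ^ (-δ)) ^ f := by
  have hn' : (0 : ℝ) < n := by exact_mod_cast hn
  have hsplit : (n : ℝ) ^ (2 - f * δ) = (n : ℝ) ^ 2 * ((n : ℝ) ^ (-δ)) ^ f := by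
    rw [← rpow_natCast _ f, ← rpow_mul hn'.le, sub_eq_add_neg, rpow_add hn', neg_mul, mul_comm δ,
      rpow_two]
  rw [hsplit, ← mul_assoc, ← mul_pow]
  push_cast
  gcongr
  nlinarith [mul_nonneg hε.le hn'.le]

theorem tendsto_two_pow_mul_succ_pow_mul_exp {ε δ : ℝ} {f : ℕ} (hε : 0 < ε) (hε1 : ε ≤ 1)
    (hfδ : f * δ < 1) :
    Tendsto (fun n : ℕ => ((2 ^ n * (⌈ε * n⌉₊ + 1) ^ n : ℕ) : ℝ) *
      exp (-((⌈ε * n⌉₊ * ⌈ε * n⌉₊ : ℕ) * ((n : ℝ) ^ (-δ)) ^ f))) atTop (𝓝 0) := by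
  have hlim : Tendsto (fun n : ℕ => exp ((n : ℝ) * log (4 * n) - ε ^ 2 * (n : ℝ) ^ (2 - f * δ)))
      atTop (𝓝 0) :=
    tendsto_exp_atBot.comp ((tendsto_mul_log_sub_rpow_atBot (by norm_num) (by positivity)
      (by linarith)).comp tendsto_natCast_atTop_atTop)
  refine squeeze_zero' (Eventually.of_forall fun n => by positivity) ?_ hlim
  filter_upwards [eventually_gt_atTop 0] with n hn
  have hn' : (1 : ℝ) ≤ n := by exact_mod_cast hn
  have hm : ε * n ≤ ⌈ε * n⌉₊ := Nat.le_ceil _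
  have hmn : (⌈ε * n⌉₊ : ℝ) ≤ n := by
    exact_mod_cast Nat.ceil_le.2 (by nlinarith)
  have hcount : ((2 ^ n * (⌈ε * n⌉₊ + 1) ^ n : ℕ) : ℝ) ≤ exp (n * log (4 * n)) := by
    rw [← log_pow, exp_log (by positivity), ← mul_pow]
    push_cast
    gcongr ?_ ^ _
    linarith
  rw [sub_eq_add_neg, exp_add]
  exact mul_le_mul hcount (exp_le_exp.2 (neg_le_neg (sq_mul_rpow_two_sub_le hε hn hm)))
    (by positivity) (by positivity)

theorem goodEvent_whp_general (ε : ℝ) (hε : ε ∈ Set.Ioo (0 : ℝ) 1) (f : ℕ)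
    (δ : ℝ) (hδ : δ ∈ Set.Ioo (0 : ℝ) 1) (hfδ : (f : ℝ) * δ < 1) :
    Filter.Tendsto
      (fun n : ℕ =>
        bipMeasure n (ENNReal.ofReal ((n : ℝ) ^ (-δ))) (ofReal_rpow_neg_le_one n δ hδ.1)
          {ω | GoodEvent n ε f ω})
      Filter.atTop (nhds 1) := by
  refine tendsto_measure_of_tendsto_measure_compl
    (s := fun n => {ω : Fin n × Fin n → Bool | GoodEvent n ε f ω})
    (fun _ => .of_discrete) ?_
  have hbound :=
    ENNReal.tendsto_ofReal ((tendsto_two_pow_mul_succ_pow_mul_exp hε.1 hε.2.le hfδ).const_mul 2)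
  rw [mul_zero, ENNReal.ofReal_zero] at hbound
  exact tendsto_of_tendsto_of_tendsto_of_le_of_le tendsto_const_nhds hbound (fun _ => zero_le)
    fun n => bipMeasure_ofReal_not_goodEvent_le n f ε (Real.rpow_nonneg n.cast_nonneg _) _

/-- With high probability as `n → ∞`, the random bipartite graph `G(n,n,n^{-δ})` (with
`fδ < 1`) satisfies the good event. -/
theorem goodEvent_whp (ε : ℝ) (hε : ε ∈ Set.Ioo (0 : ℝ) 1) (f : ℕ) (hf : 0 < f)
    (δ : ℝ) (hδ : δ ∈ Set.Ioo (0 : ℝ) 1) (hfδ : (f : ℝ) * δ < 1) :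
    Filter.Tendsto
      (fun n : ℕ =>
        bipMeasure n (ENNReal.ofReal ((n : ℝ) ^ (-δ))) (ofReal_rpow_neg_le_one n δ hδ.1)
          {ω | GoodEvent n ε f ω})
      Filter.atTop (nhds 1) :=
  goodEvent_whp_general ε hε f δ hδ hfδ
end

section
/- For every ε ∈ (0,1) there exists n₀ such that for all n ≥ n₀ there is a graph H whose vertex set is partitioned into sets A and B of size n each, such that: (1) A and B are cliques in H; (2) every vertex of H is non-adjacent to at most εn other vertices of H; and (3) for every integer t ≥ (1+2ε)n, H contains no K_t-minor. -/
/-!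
Let `A` and `B` be cliques of size `n`, and join `a ∈ A` to `b ∈ B` unless a uniformly random
colour `ω (a, b)` among `K = 2 ^ ⌈4/ε⌉` colours is `0`. Rows and columns with more than `εn`
zeros are rare, since `K ^ (εn) ≥ 16 ^ n`.

In a `K_t`-minor with `t ≥ n + e`, `e = ⌈εn⌉`, at most `n` branch sets meet `B`, so `e` of them
lie inside `A`, and likewise `e` inside `B`. Being disjoint, all but `n / (s + 1)` of them on each
side have at most `s ≈ 8/ε` vertices, leaving `≥ (εn/2)²` small pairs, each with no edge between
them (all colours `0`) with probability `≥ K ^ (-s²)`, independently since the pairs use disjoint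
sets of entries. A union bound over the `(e + 1) ^ (2n)` ways to place the branch sets then beats
`(1 - K ^ (-s²)) ^ ((εn/2)²)`, so some colouring makes every placement contain an edgeless pair,
which contradicts the minor.
-/

open Finset Filter Function

/-- A graph `G` contains a `K_t`-minor: there are `t` pairwise disjoint nonempty vertex subsets,
each inducing a connected subgraph, with an edge of `G` between every two of them. -/
def SimpleGraph.HasKMinor {V : Type*} (G : SimpleGraph V) (t : ℕ) : Prop :=
  ∃ Z : Fin t → Set V,
    (∀ i, (Z i).Nonempty) ∧
    Pairwise (Function.onFun Disjoint Z) ∧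
    (∀ i, (G.induce (Z i)).Connected) ∧
    Pairwise fun i j => ∃ a ∈ Z i, ∃ b ∈ Z j, G.Adj a b

section FunctionCounting

variable {I γ : Type*}

theorem dependsOn_exists_ne (C : Finset I) (z : γ) :
    DependsOn (fun ω : I → γ => ∃ i ∈ C, ω i ≠ z) C := fun x y h =>
  propext <| exists_congr fun i => and_congr_right fun hi => by rw [h i hi]

variable [Fintype I] [DecidableEq I] [Fintype γ]

theorem card_filter_and_mul_card_of_dependsOn {P Q : (I → γ) → Prop} [DecidablePred P]
    [DecidablePred Q] {U W : Set I} (hP : DependsOn P U) (hQ : DependsOn Q W) (hUW : Disjoint U W) :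
    #{ω | P ω ∧ Q ω} * Fintype.card (I → γ) = #{ω | P ω} * #{ω | Q ω} := by
  classical
  let merge : (I → γ) → (I → γ) → I → γ := fun u v => U.piecewise u v
  have merge_U (u v) : ∀ i ∈ U, merge u v i = u i := fun _ hi => U.piecewise_eq_of_mem u v hi
  have merge_W (u v) : ∀ i ∈ W, merge u v i = v i := fun _ hi =>
    U.piecewise_eq_of_notMem u v (hUW.notMem_of_mem_right hi)
  have merge_merge (u v) : merge (merge u v) (merge v u) = u := by
    funext i; by_cases hi : i ∈ U <;> simp [merge, hi]
  -- `(u, v) ↦ (merge u v, merge v u)` is an involution exchanging the two product sets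
  rw [← card_univ, ← card_product, ← card_product]
  refine card_nbij' (fun p => (merge p.1 p.2, merge p.2 p.1))
    (fun p => (merge p.1 p.2, merge p.2 p.1)) ?_ ?_ ?_ ?_
  · rintro ⟨u, v⟩ h
    simp only [mem_coe, mem_product, mem_filter, mem_univ, true_and, and_true] at h ⊢
    exact ⟨hP (merge_U u v) ▸ h.1, hQ (merge_W v u) ▸ h.2⟩
  · rintro ⟨u, v⟩ h
    simp only [mem_coe, mem_product, mem_filter, mem_univ, true_and, and_true] at h ⊢
    exact ⟨hP (merge_U u v) ▸ h.1, hQ (merge_W u v) ▸ h.2⟩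
  · rintro ⟨u, v⟩ -
    simp [merge_merge]
  · rintro ⟨u, v⟩ -
    simp [merge_merge]

variable [DecidableEq γ]

theorem card_filter_forall_eq_mul_pow (C : Finset I) (z : γ) :
    #{ω : I → γ | ∀ i ∈ C, ω i = z} * Fintype.card γ ^ #C = Fintype.card (I → γ) := by
  have : ({ω : I → γ | ∀ i ∈ C, ω i = z} : Finset _) =
      Fintype.piFinset fun i => if i ∈ C then {z} else univ := by
    ext ω
    simp only [mem_filter, mem_univ, true_and, Fintype.mem_piFinset]
    refine forall_congr' fun i => ?_
    split_ifs with hi <;> simp [hi]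
  simp only [this, Fintype.card_piFinset, apply_ite card, card_singleton, card_univ, prod_ite,
    prod_const_one, prod_const, one_mul, Fintype.card_fun, ← pow_add]
  rw [filter_not, filter_univ_mem, card_sdiff_of_subset (subset_univ C), card_univ,
    Nat.sub_add_cancel (card_le_univ C)]

theorem card_filter_exists_ne_le (C : Finset I) (z : γ) {s : ℕ} (hC : #C ≤ s) :
    (#{ω : I → γ | ∃ i ∈ C, ω i ≠ z} : ℝ) ≤
      Fintype.card (I → γ) * (1 - ((Fintype.card γ : ℝ) ^ s)⁻¹) := by
  have hγ : (1 : ℝ) ≤ Fintype.card γ := by exact_mod_cast Fintype.card_pos_iff.mpr ⟨z⟩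
  have hsplit : #{ω : I → γ | ∀ i ∈ C, ω i = z} + #{ω : I → γ | ∃ i ∈ C, ω i ≠ z} =
      Fintype.card (I → γ) := by
    simpa using card_filter_add_card_filter_not (s := univ) fun ω : I → γ => ∀ i ∈ C, ω i = z
  have hzero : (#{ω : I → γ | ∀ i ∈ C, ω i = z} : ℝ) * (Fintype.card γ : ℝ) ^ #C =
      Fintype.card (I → γ) := by exact_mod_cast card_filter_forall_eq_mul_pow C z
  have hpow : (Fintype.card γ : ℝ) ^ #C ≤ (Fintype.card γ : ℝ) ^ s := pow_le_pow_right₀ hγ hC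
  rw [← Nat.cast_inj (R := ℝ), Nat.cast_add] at hsplit
  have : (Fintype.card γ : ℝ) ^ #C * ((Fintype.card γ : ℝ) ^ s)⁻¹ ≤ 1 := by
    rw [mul_inv_le_iff₀ (by positivity), one_mul]; exact hpow
  rw [mul_one_sub, ← hzero, mul_assoc]
  nlinarith [Nat.cast_nonneg (α := ℝ) #{ω : I → γ | ∀ i ∈ C, ω i = z}]

theorem card_filter_forall_exists_ne_le {ι : Type*} (D : Finset ι) (C : ι → Finset I)
    (hC : (D : Set ι).PairwiseDisjoint C) {s : ℕ} (hs : ∀ l ∈ D, #(C l) ≤ s) (z : γ) :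
    (#{ω : I → γ | ∀ l ∈ D, ∃ i ∈ C l, ω i ≠ z} : ℝ) ≤
      Fintype.card (I → γ) * (1 - ((Fintype.card γ : ℝ) ^ s)⁻¹) ^ #D := by
  classical
  induction D using Finset.induction_on with
  | empty => simp
  | insert a D ha ih =>
    have hindep := card_filter_and_mul_card_of_dependsOn (P := fun ω : I → γ => ∃ i ∈ C a, ω i ≠ z)
      (Q := fun ω => ∀ l ∈ D, ∃ i ∈ C l, ω i ≠ z) (U := C a) (W := ⋃ l ∈ D, (C l : Set I))
      (dependsOn_exists_ne (C a) z)
      (fun x y h => propext <| forall₂_congr fun l hl => Eq.to_iff <|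
        dependsOn_exists_ne (C l) z fun i hi => h i (Set.mem_iUnion₂.mpr ⟨l, hl, hi⟩))
      (Set.disjoint_iUnion₂_right.mpr fun l hl => disjoint_coe.mpr <|
        hC (mem_insert_self a D) (mem_insert_of_mem hl) (ne_of_mem_of_not_mem hl ha).symm)
    have hP := card_filter_exists_ne_le (C a) z (hs a (mem_insert_self a D))
    have hQ := ih (hC.subset (by simp)) fun l hl => hs l (mem_insert_of_mem hl)
    have hγ : (1 : ℝ) ≤ Fintype.card γ := by exact_mod_cast Fintype.card_pos_iff.mpr ⟨z⟩
    have hr : 0 ≤ 1 - ((Fintype.card γ : ℝ) ^ s)⁻¹ :=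
      sub_nonneg.mpr (inv_le_one_of_one_le₀ (one_le_pow₀ hγ))
    have hN : (0 : ℝ) < Fintype.card (I → γ) := by
      exact_mod_cast Fintype.card_pos_iff.mpr ⟨fun _ => z⟩
    simp only [forall_mem_insert]
    rw [card_insert_of_notMem ha, pow_succ]
    refine le_of_mul_le_mul_right ?_ hN
    calc (#{ω : I → γ | (∃ i ∈ C a, ω i ≠ z) ∧ ∀ l ∈ D, ∃ i ∈ C l, ω i ≠ z} : ℝ) *
          Fintype.card (I → γ)
        = #{ω : I → γ | ∃ i ∈ C a, ω i ≠ z} *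
            #{ω : I → γ | ∀ l ∈ D, ∃ i ∈ C l, ω i ≠ z} := by
          exact_mod_cast hindep
      _ ≤ _ := by
          rw [mul_comm]
          refine (mul_le_mul hQ hP (by positivity) (by positivity)).trans_eq (by ring)

theorem card_filter_le_card_filter_comp_eq_le {J : Type*} [Fintype J] {φ : J → I}
    (hφ : φ.Injective) (m : ℕ) (z : γ) :
    (#{ω : I → γ | m ≤ #{j | ω (φ j) = z}} : ℝ) ≤
      (Fintype.card J).choose m * Fintype.card (I → γ) / (Fintype.card γ : ℝ) ^ m := by
  have hγ : (0 : ℝ) < Fintype.card γ := by exact_mod_cast Fintype.card_pos_iff.mpr ⟨z⟩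
  let zeroOn (T : Finset J) : Finset (I → γ) := {ω | ∀ i ∈ T.map ⟨φ, hφ⟩, ω i = z}
  have hcover : ({ω : I → γ | m ≤ #{j | ω (φ j) = z}} : Finset _) ⊆
      (powersetCard m univ).biUnion zeroOn := by
    intro ω hω
    obtain ⟨T, hT, hTcard⟩ := exists_subset_card_eq (mem_filter.mp hω).2
    refine mem_biUnion.mpr ⟨T, mem_powersetCard.mpr ⟨subset_univ _, hTcard⟩, ?_⟩
    simpa [zeroOn] using fun j hj => (mem_filter.mp (hT hj)).2
  have hzeroOn : ∀ T ∈ powersetCard m (univ : Finset J),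
      (#(zeroOn T) : ℝ) = Fintype.card (I → γ) / (Fintype.card γ : ℝ) ^ m := by
    intro T hT
    have := card_filter_forall_eq_mul_pow (T.map ⟨φ, hφ⟩) z
    rw [card_map, (mem_powersetCard.mp hT).2] at this
    rw [eq_div_iff (by positivity)]
    exact_mod_cast this
  calc (#{ω : I → γ | m ≤ #{j | ω (φ j) = z}} : ℝ)
      ≤ ∑ T ∈ powersetCard m univ, (#(zeroOn T) : ℝ) := by
        exact_mod_cast (card_le_card hcover).trans card_biUnion_le
    _ = _ := by
        rw [sum_congr rfl hzeroOn, sum_const, card_powersetCard, card_univ, nsmul_eq_mul,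
          mul_div_assoc]

end FunctionCounting

theorem card_sub_div_le_card_small_fibers {α ι : Type*} [Fintype α] [Fintype ι] [DecidableEq ι]
    (f : α → Option ι) (s : ℕ) :
    Fintype.card ι - Fintype.card α / (s + 1) ≤ #{k | #{a | f a = some k} ≤ s} := by
  let big : Finset ι := {k | ¬ #{a | f a = some k} ≤ s}
  have hbig : #big * (s + 1) ≤ Fintype.card α :=
    calc #big * (s + 1) ≤ ∑ k ∈ big, #{a | f a = some k} := by
          rw [← smul_eq_mul]
          exact card_nsmul_le_sum _ _ _ fun k hk => by simpa [big] using hk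
      _ = #{a | f a ∈ big.map ⟨some, Option.some_injective ι⟩} := by
          rw [← sum_card_fiberwise_eq_card_filter, sum_map]; rfl
      _ ≤ Fintype.card α := card_le_univ _
  have hsplit : #{k | #{a | f a = some k} ≤ s} + #big = Fintype.card ι :=
    card_filter_add_card_filter_not _
  have : #big ≤ Fintype.card α / (s + 1) := (Nat.le_div_iff_mul_le s.succ_pos).mpr hbig
  omega

theorem card_filter_forall_exists_ne_on_fibers_le {α β ι κ γ : Type*} [Fintype α]
    [DecidableEq α] [Fintype β] [DecidableEq β] [Fintype ι] [DecidableEq ι] [Fintype κ]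
    [DecidableEq κ] [Fintype γ] [DecidableEq γ] (f : α → Option ι) (g : β → Option κ) (s : ℕ)
    (z : γ) :
    (#{ω : α × β → γ | ∀ k l, ∃ a b, f a = some k ∧ g b = some l ∧ ω (a, b) ≠ z} : ℝ) ≤
      Fintype.card (α × β → γ) * (1 - ((Fintype.card γ : ℝ) ^ (s * s))⁻¹) ^
        ((Fintype.card ι - Fintype.card α / (s + 1)) *
          (Fintype.card κ - Fintype.card β / (s + 1))) := by
  let fiberF (k : ι) : Finset α := {a | f a = some k}
  let fiberG (l : κ) : Finset β := {b | g b = some l}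
  let small : Finset (ι × κ) :=
    ({k | #(fiberF k) ≤ s} : Finset ι) ×ˢ ({l | #(fiberG l) ≤ s} : Finset κ)
  let block (p : ι × κ) : Finset (α × β) := fiberF p.1 ×ˢ fiberG p.2
  have hblock : (small : Set (ι × κ)).PairwiseDisjoint block := by
    rintro ⟨k, l⟩ - ⟨k', l'⟩ - hne
    refine disjoint_product.mpr ?_
    by_cases hk : k = k'
    · refine .inr (disjoint_filter.mpr fun b _ hb hb' => ?_)
      exact hne (Prod.ext hk (Option.some_injective _ (hb.symm.trans hb')))
    · exact .inl (disjoint_filter.mpr fun a _ ha ha' =>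
        hk (Option.some_injective _ (ha.symm.trans ha')))
  have hsmall : ∀ p ∈ small, #(block p) ≤ s * s := fun p hp => by
    simp only [small, mem_product, mem_filter] at hp
    exact card_product _ _ ▸ Nat.mul_le_mul hp.1.2 hp.2.2
  have hcard_small : (Fintype.card ι - Fintype.card α / (s + 1)) *
      (Fintype.card κ - Fintype.card β / (s + 1)) ≤ #small :=
    (card_product _ _).symm ▸ Nat.mul_le_mul (card_sub_div_le_card_small_fibers f s)
      (card_sub_div_le_card_small_fibers g s)
  have hγ : (1 : ℝ) ≤ Fintype.card γ := by exact_mod_cast Fintype.card_pos_iff.mpr ⟨z⟩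
  have hpow : (1 - ((Fintype.card γ : ℝ) ^ (s * s))⁻¹) ^ #small ≤
      (1 - ((Fintype.card γ : ℝ) ^ (s * s))⁻¹) ^
        ((Fintype.card ι - Fintype.card α / (s + 1)) *
          (Fintype.card κ - Fintype.card β / (s + 1))) :=
    pow_le_pow_of_le_one (sub_nonneg.mpr (inv_le_one_of_one_le₀ (one_le_pow₀ hγ)))
      (sub_le_self _ (by positivity)) hcard_small
  refine (Nat.cast_le.mpr (card_le_card ?_)).trans
    ((card_filter_forall_exists_ne_le small block hblock hsmall z).trans
      (mul_le_mul_of_nonneg_left hpow (by positivity)))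
  intro ω hω
  simp only [mem_filter, mem_univ, true_and] at hω ⊢
  intro p _
  obtain ⟨a, b, ha, hb, hne⟩ := hω p.1 p.2
  exact ⟨(a, b), by simp [block, fiberF, fiberG, ha, hb], hne⟩

theorem card_biUnion_filter_forall_exists_ne_le {γ : Type*} [Fintype γ] [DecidableEq γ]
    (z : γ) (n e s : ℕ) :
    (#((univ : Finset ((Fin n → Option (Fin e)) × (Fin n → Option (Fin e)))).biUnion fun fg =>
      {ω : Fin n × Fin n → γ | ∀ k l, ∃ a b, fg.1 a = some k ∧ fg.2 b = some l ∧
        ω (a, b) ≠ z}) : ℝ) ≤ (e + 1 : ℝ) ^ (2 * n) * (Fintype.card (Fin n × Fin n → γ) *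
      (1 - ((Fintype.card γ : ℝ) ^ (s * s))⁻¹) ^ ((e - n / (s + 1)) * (e - n / (s + 1)))) := by
  have hfg (fg : (Fin n → Option (Fin e)) × (Fin n → Option (Fin e))) :
      (#{ω : Fin n × Fin n → γ | ∀ k l, ∃ a b, fg.1 a = some k ∧ fg.2 b = some l ∧
        ω (a, b) ≠ z} : ℝ) ≤ Fintype.card (Fin n × Fin n → γ) *
          (1 - ((Fintype.card γ : ℝ) ^ (s * s))⁻¹) ^ ((e - n / (s + 1)) * (e - n / (s + 1))) := by
    -- the filters differ only in the decidability instances found for `∀ k l : Fin e`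
    convert card_filter_forall_exists_ne_on_fibers_le fg.1 fg.2 s z using 3 <;> simp
  refine (Nat.cast_le.mpr card_biUnion_le).trans ?_
  rw [Nat.cast_sum]
  refine (sum_le_sum fun fg _ => hfg fg).trans_eq ?_
  simp [two_mul, pow_add]

/-- With `K` colours, the first term bounds the probability that some row or column of a random
colouring has `m` zeros, the second that some placement of `e` disjoint sets on each side leaves
an entry `≠ 0` between every set on one side and every set on the other. -/
noncomputable def badColoringBound (K n e s m : ℕ) : ℝ :=
  2 * n * n.choose m / (K : ℝ) ^ m +
    (e + 1 : ℝ) ^ (2 * n) * (1 - ((K : ℝ) ^ (s * s))⁻¹) ^ ((e - n / (s + 1)) * (e - n / (s + 1)))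

theorem exists_coloring_of_lt_one {γ : Type*} [Fintype γ] [DecidableEq γ] (z : γ)
    (n e s m : ℕ)
    (h : badColoringBound (Fintype.card γ) n e s m < 1) :
    ∃ ω : Fin n × Fin n → γ, (∀ a, #{b | ω (a, b) = z} < m) ∧ (∀ b, #{a | ω (a, b) = z} < m) ∧
      ∀ f g : Fin n → Option (Fin e),
        ∃ k l, ∀ a b, f a = some k → g b = some l → ω (a, b) = z := by
  let rowBad : Finset (Fin n × Fin n → γ) :=
    univ.biUnion fun a => {ω | m ≤ #{b | ω (a, b) = z}}
  let colBad : Finset (Fin n × Fin n → γ) :=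
    univ.biUnion fun b => {ω | m ≤ #{a | ω (a, b) = z}}
  let escBad : Finset (Fin n × Fin n → γ) :=
    (univ : Finset ((Fin n → Option (Fin e)) × (Fin n → Option (Fin e)))).biUnion fun fg =>
      {ω | ∀ k l, ∃ a b, fg.1 a = some k ∧ fg.2 b = some l ∧ ω (a, b) ≠ z}
  have hrow : (#rowBad : ℝ) ≤ n * (n.choose m * Fintype.card (Fin n × Fin n → γ) /
      (Fintype.card γ : ℝ) ^ m) := by
    refine (Nat.cast_le.mpr card_biUnion_le).trans ?_
    push_cast
    refine (sum_le_sum fun a _ =>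
      card_filter_le_card_filter_comp_eq_le (Prod.mk_right_injective a) m z).trans ?_
    simp
  have hcol : (#colBad : ℝ) ≤ n * (n.choose m * Fintype.card (Fin n × Fin n → γ) /
      (Fintype.card γ : ℝ) ^ m) := by
    refine (Nat.cast_le.mpr card_biUnion_le).trans ?_
    push_cast
    refine (sum_le_sum fun b _ =>
      card_filter_le_card_filter_comp_eq_le (Prod.mk_left_injective b) m z).trans ?_
    simp
  have hN : (0 : ℝ) < Fintype.card (Fin n × Fin n → γ) := by
    exact_mod_cast Fintype.card_pos_iff.mpr ⟨fun _ => z⟩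
  have hlt : #(rowBad ∪ colBad ∪ escBad) < #(univ : Finset (Fin n × Fin n → γ)) := by
    rw [card_univ, ← Nat.cast_lt (α := ℝ)]
    calc (#(rowBad ∪ colBad ∪ escBad) : ℝ) ≤ #rowBad + #colBad + #escBad := by
          exact_mod_cast (card_union_le (rowBad ∪ colBad) escBad).trans
            (Nat.add_le_add_right (card_union_le rowBad colBad) _)
      _ ≤ _ := add_le_add (add_le_add hrow hcol)
            (card_biUnion_filter_forall_exists_ne_le z n e s)
      _ = Fintype.card (Fin n × Fin n → γ) * badColoringBound (Fintype.card γ) n e s m := by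
          rw [badColoringBound]; ring
      _ < Fintype.card (Fin n × Fin n → γ) := mul_lt_of_lt_one_right hN h
  obtain ⟨ω, -, hω⟩ := exists_mem_notMem_of_card_lt_card hlt
  simp only [rowBad, colBad, escBad, mem_union, mem_biUnion, mem_filter, mem_univ, true_and,
    not_or, not_exists, not_le, not_forall] at hω
  exact ⟨ω, hω.1.1, hω.1.2, fun f g => by simpa using hω.2 (f, g)⟩

def ForcesAnticompletePair {α β : Type*} (R : α → β → Prop) (e : ℕ) : Prop :=
  ∀ (S : Fin e → Set α) (T : Fin e → Set β), Pairwise (Disjoint on S) → Pairwise (Disjoint on T) →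
    ∃ k l, ∀ a ∈ S k, ∀ b ∈ T l, ¬ R a b

theorem exists_option_fibers_eq {α ι : Type*} (S : ι → Set α) (hS : Pairwise (Disjoint on S)) :
    ∃ f : α → Option ι, ∀ a k, f a = some k ↔ a ∈ S k := by
  classical
  refine ⟨fun a => if h : ∃ k, a ∈ S k then some h.choose else none, fun a k => ?_⟩
  by_cases h : ∃ k, a ∈ S k
  · simp only [dif_pos h, Option.some_inj]
    refine ⟨fun hk => hk ▸ h.choose_spec, fun ha => by_contra fun hne => ?_⟩
    exact Set.disjoint_left.mp (hS hne) h.choose_spec ha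
  · simp only [dif_neg h, reduceCtorEq, false_iff]
    exact fun ha => h ⟨k, ha⟩

theorem exists_forcesAnticompletePair_of_lt_one {γ : Type*} [Fintype γ] [DecidableEq γ]
    (z : γ) (n e s m : ℕ)
    (h : badColoringBound (Fintype.card γ) n e s m < 1) :
    ∃ R : Fin n → Fin n → Prop, (∀ a, {b | ¬ R a b}.ncard < m) ∧
      (∀ b, {a | ¬ R a b}.ncard < m) ∧ ForcesAnticompletePair R e := by
  obtain ⟨ω, hrow, hcol, hfibers⟩ := exists_coloring_of_lt_one z n e s m h
  refine ⟨fun a b => ω (a, b) ≠ z, fun a => ?_, fun b => ?_, fun S T hS hT => ?_⟩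
  · simpa [Set.ncard_eq_toFinset_card'] using hrow a
  · simpa [Set.ncard_eq_toFinset_card'] using hcol b
  obtain ⟨f, hf⟩ := exists_option_fibers_eq S hS
  obtain ⟨g, hg⟩ := exists_option_fibers_eq T hT
  obtain ⟨k, l, hkl⟩ := hfibers f g
  exact ⟨k, l, fun a ha b hb => not_not.mpr (hkl a b ((hf a k).mpr ha) ((hg b l).mpr hb))⟩

theorem exists_fin_embedding_avoiding_range {ι V β : Type*} [Fintype ι] [Fintype β]
    {Z : ι → Set V} (hZ : Pairwise (Disjoint on Z)) (g : β → V) {e : ℕ}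
    (he : Fintype.card β + e ≤ Fintype.card ι) : ∃ φ : Fin e ↪ ι, ∀ k b, g b ∉ Z (φ k) := by
  classical
  -- a member meeting the range of `g` picks a witness; disjointness makes the choice injective
  have hmeet : #{i | ∃ b, g b ∈ Z i} ≤ Fintype.card β := by
    rw [← Fintype.card_subtype]
    refine Fintype.card_le_of_injective (fun i => i.2.choose) fun i j hij =>
      by_contra fun hne => ?_
    exact Set.disjoint_left.mp (hZ (Subtype.coe_ne_coe.mpr hne)) i.2.choose_spec
      ((congrArg g hij).symm ▸ j.2.choose_spec)
  have hfree : e ≤ #{i | ∀ b, g b ∉ Z i} := by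
    have := card_filter_add_card_filter_not (s := univ) fun i => ∃ b, g b ∈ Z i
    simp only [not_exists, card_univ] at this
    omega
  obtain ⟨s, hs, hcard⟩ := exists_subset_card_eq hfree
  exact ⟨(s.equivFinOfCardEq hcard).symm.toEmbedding.trans (Embedding.subtype _),
    fun k => (mem_filter.mp (hs ((s.equivFinOfCardEq hcard).symm k).2)).2⟩

def twoCliqueGraph {α β : Type*} (R : α → β → Prop) : SimpleGraph (α ⊕ β) where
  Adj
    | .inl a, .inl a' => a ≠ a'
    | .inl a, .inr b => R a b
    | .inr b, .inl a => R a b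
    | .inr b, .inr b' => b ≠ b'
  symm := ⟨by rintro (a | b) (a' | b') h <;> first | exact h | exact Ne.symm h⟩
  loopless := ⟨by rintro (a | b) h <;> exact h rfl⟩

section TwoCliqueGraph

variable {α β : Type*} (R : α → β → Prop)

@[simp] theorem twoCliqueGraph_adj_inl_inl {a a' : α} :
    (twoCliqueGraph R).Adj (.inl a) (.inl a') ↔ a ≠ a' := Iff.rfl

@[simp] theorem twoCliqueGraph_adj_inl_inr {a : α} {b : β} :
    (twoCliqueGraph R).Adj (.inl a) (.inr b) ↔ R a b := Iff.rfl

@[simp] theorem twoCliqueGraph_adj_inr_inl {a : α} {b : β} :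
    (twoCliqueGraph R).Adj (.inr b) (.inl a) ↔ R a b := Iff.rfl

@[simp] theorem twoCliqueGraph_adj_inr_inr {b b' : β} :
    (twoCliqueGraph R).Adj (.inr b) (.inr b') ↔ b ≠ b' := Iff.rfl

theorem twoCliqueGraph_isClique_range_inl :
    (twoCliqueGraph R).IsClique (Set.range Sum.inl) := by
  rintro _ ⟨a, rfl⟩ _ ⟨a', rfl⟩ h
  exact fun h' => h (congrArg _ h')

theorem twoCliqueGraph_isClique_range_inr :
    (twoCliqueGraph R).IsClique (Set.range Sum.inr) := by
  rintro _ ⟨b, rfl⟩ _ ⟨b', rfl⟩ h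
  exact fun h' => h (congrArg _ h')

theorem twoCliqueGraph_ncard_nonadj_inl (a : α) :
    {w | w ≠ .inl a ∧ ¬ (twoCliqueGraph R).Adj (.inl a) w}.ncard = {b | ¬ R a b}.ncard := by
  have : {w | w ≠ .inl a ∧ ¬ (twoCliqueGraph R).Adj (.inl a) w} = Sum.inr '' {b | ¬ R a b} := by
    ext (a' | b) <;> simp [eq_comm]
  rw [this, Set.ncard_image_of_injective _ Sum.inr_injective]

theorem twoCliqueGraph_ncard_nonadj_inr (b : β) :
    {w | w ≠ .inr b ∧ ¬ (twoCliqueGraph R).Adj (.inr b) w}.ncard = {a | ¬ R a b}.ncard := by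
  have : {w | w ≠ .inr b ∧ ¬ (twoCliqueGraph R).Adj (.inr b) w} = Sum.inl '' {a | ¬ R a b} := by
    ext (a | b') <;> simp [eq_comm]
  rw [this, Set.ncard_image_of_injective _ Sum.inl_injective]

theorem twoCliqueGraph_not_hasKMinor [Fintype α] [Fintype β] {R : α → β → Prop} {e t : ℕ}
    (hR : ForcesAnticompletePair R e) (hα : Fintype.card α + e ≤ t)
    (hβ : Fintype.card β + e ≤ t) : ¬ (twoCliqueGraph R).HasKMinor t := by
  rintro ⟨Z, hne, hdisj, -, hadj⟩
  obtain ⟨iA, hA⟩ := exists_fin_embedding_avoiding_range hdisj Sum.inr (by simpa using hβ)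
  obtain ⟨iB, hB⟩ := exists_fin_embedding_avoiding_range hdisj Sum.inl (by simpa using hα)
  obtain ⟨k, l, hkl⟩ := hR (fun k => Sum.inl ⁻¹' Z (iA k)) (fun l => Sum.inr ⁻¹' Z (iB l))
    (fun _ _ h => (hdisj (iA.injective.ne h)).preimage _)
    (fun _ _ h => (hdisj (iB.injective.ne h)).preimage _)
  have hAB : iA k ≠ iB l := by
    intro heq
    obtain ⟨v | v, hv⟩ := hne (iA k)
    · exact hB l v (heq ▸ hv)
    · exact hA k v hv
  obtain ⟨u, hu, w, hw, huw⟩ := hadj hAB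
  rcases u with a | b
  · rcases w with a' | b
    · exact hB l a' hw
    · exact hkl a hu b hw huw
  · exact hA k b hu

end TwoCliqueGraph

theorem two_mul_mul_choose_div_le_half (n m c : ℕ) (h : 4 * n ≤ c * m) :
    (2 * n * n.choose m : ℝ) / ((2 : ℝ) ^ c) ^ m ≤ 1 / 2 := by
  rcases Nat.eq_zero_or_pos n with rfl | hn
  · simp
  have hnat : 2 * (2 * n * n.choose m) ≤ (2 ^ c) ^ m :=
    calc 2 * (2 * n * n.choose m) ≤ 2 * (2 * 2 ^ n * 2 ^ n) := by
          gcongr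
          · exact n.lt_two_pow_self.le
          · exact n.choose_le_two_pow m
      _ = 2 ^ (2 * n + 2) := by ring
      _ ≤ 2 ^ (c * m) := Nat.pow_le_pow_right two_pos (by omega)
      _ = (2 ^ c) ^ m := pow_mul 2 c m
  rw [div_le_iff₀ (by positivity)]
  have : (2 * (2 * n * n.choose m) : ℝ) ≤ ((2 : ℝ) ^ c) ^ m := by exact_mod_cast hnat
  linarith

theorem half_mul_le_ceil_sub_div {ε : ℝ} (hε : 0 < ε) (n s : ℕ) (hs : 8 / ε ≤ s) :
    ε * n / 2 ≤ ((⌈ε * n⌉₊ - n / (s + 1) : ℕ) : ℝ) := by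
  have hdiv : ((n / (s + 1) : ℕ) : ℝ) ≤ ε * n / 8 :=
    calc ((n / (s + 1) : ℕ) : ℝ) ≤ n / (s + 1) := by exact_mod_cast Nat.cast_div_le
      _ ≤ n / (8 / ε) := div_le_div_of_nonneg_left (by positivity) (by positivity) (by linarith)
      _ = ε * n / 8 := by field_simp
  have hceil : ε * n ≤ ⌈ε * n⌉₊ := Nat.le_ceil _
  have hle : n / (s + 1) ≤ ⌈ε * n⌉₊ := by
    have : ((n / (s + 1) : ℕ) : ℝ) ≤ ⌈ε * n⌉₊ := by nlinarith [Nat.cast_nonneg (α := ℝ) n]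
    exact_mod_cast this
  rw [Nat.cast_sub hle]
  nlinarith [Nat.cast_nonneg (α := ℝ) n]

theorem eventually_pow_mul_one_sub_pow_lt_half {ε q : ℝ} (hε0 : 0 < ε) (hε1 : ε < 1)
    (hq0 : 0 < q) (hq1 : q ≤ 1) {s : ℕ} (hs : 8 / ε ≤ s) :
    ∀ᶠ n : ℕ in atTop, ((⌈ε * n⌉₊ : ℝ) + 1) ^ (2 * n) *
      (1 - q) ^ ((⌈ε * n⌉₊ - n / (s + 1)) * (⌈ε * n⌉₊ - n / (s + 1))) < 1 / 2 := by
  set r := Real.exp (-(q * ε ^ 2 / 4))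
  have hr : r < 1 := Real.exp_lt_one_iff.mpr (by nlinarith [sq_pos_of_pos hε0])
  have hsmall := (tendsto_pow_const_mul_const_pow_of_lt_one 2 (Real.exp_pos _).le
    hr).eventually_lt_const (by norm_num : (0 : ℝ) < 1 / 8)
  filter_upwards [hsmall, eventually_ge_atTop 1] with n hsmall hn
  set k := ⌈ε * n⌉₊ - n / (s + 1)
  have hn' : (1 : ℝ) ≤ n := by exact_mod_cast hn
  have he : ((⌈ε * n⌉₊ : ℝ) + 1) ^ 2 ≤ 4 * (n : ℝ) ^ 2 := by
    have : (⌈ε * n⌉₊ : ℝ) ≤ n := by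
      exact_mod_cast Nat.ceil_le.mpr (by nlinarith : ε * n ≤ (n : ℝ))
    nlinarith
  have hk : (1 - q) ^ (k * k) ≤ (r ^ n) ^ n := by
    have hkn := half_mul_le_ceil_sub_div hε0 n s hs
    calc (1 - q) ^ (k * k) ≤ Real.exp (-q) ^ (k * k) :=
          pow_le_pow_left₀ (by linarith) (Real.one_sub_le_exp_neg q) _
      _ = Real.exp (-(q * ((k : ℝ) * k))) := by rw [← Real.exp_nat_mul]; push_cast; ring_nf
      _ ≤ Real.exp (-(q * ε ^ 2 / 4) * (n * n)) := by
          refine Real.exp_le_exp.mpr ?_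
          nlinarith [mul_le_mul hkn hkn (by positivity) (by positivity)]
      _ = (r ^ n) ^ n := by rw [← pow_mul, ← Real.exp_nat_mul]; push_cast; ring_nf
  calc ((⌈ε * n⌉₊ : ℝ) + 1) ^ (2 * n) * (1 - q) ^ (k * k)
      ≤ (4 * (n : ℝ) ^ 2) ^ n * (r ^ n) ^ n := by
        rw [pow_mul]
        exact mul_le_mul (pow_le_pow_left₀ (by positivity) he n) hk (by positivity)
          (by positivity)
    _ = (4 * ((n : ℝ) ^ 2 * r ^ n)) ^ n := by rw [← mul_pow, mul_assoc]
    _ < (1 / 2) ^ n := pow_lt_pow_left₀ (by linarith) (by positivity) (by omega)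
    _ ≤ 1 / 2 := pow_le_of_le_one (by norm_num) (by norm_num) (by omega)

theorem exists_eventually_badColoringBound_lt_one {ε : ℝ} (hε0 : 0 < ε) (hε1 : ε < 1) :
    ∃ K s : ℕ, 0 < K ∧ ∀ᶠ n : ℕ in atTop,
      badColoringBound K n ⌈ε * n⌉₊ s (⌊ε * n⌋₊ + 1) < 1 := by
  set c := ⌈4 / ε⌉₊
  refine ⟨2 ^ c, ⌈8 / ε⌉₊, by positivity, ?_⟩
  have hK : (1 : ℝ) ≤ ((2 ^ c : ℕ) : ℝ) ^ (⌈8 / ε⌉₊ * ⌈8 / ε⌉₊) :=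
    one_le_pow₀ (by exact_mod_cast Nat.one_le_two_pow)
  filter_upwards [eventually_pow_mul_one_sub_pow_lt_half hε0 hε1 (by positivity)
    (inv_le_one_of_one_le₀ hK) (Nat.le_ceil _)] with n hn
  have hcm : 4 * n ≤ c * (⌊ε * n⌋₊ + 1) := by
    have : (4 * n : ℝ) ≤ c * (⌊ε * n⌋₊ + 1) :=
      calc (4 * n : ℝ) = 4 / ε * (ε * n) := by field_simp
        _ ≤ c * (⌊ε * n⌋₊ + 1) :=
          mul_le_mul (Nat.le_ceil _) (Nat.lt_floor_add_one _).le (by positivity) (by positivity)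
    exact_mod_cast this
  have := two_mul_mul_choose_div_le_half n _ c hcm
  rw [badColoringBound]
  push_cast at this hn ⊢
  linarith

/-- For every `ε ∈ (0,1)` and all sufficiently large `n`, there is a graph `H` whose vertex
set is partitioned into cliques `A`, `B` of size `n` each, every vertex has at most `εn`
non-neighbors, and `H` has no `K_t`-minor for any `t ≥ (1+2ε)n`. -/
theorem exists_good_graph :
    ∀ ε ∈ Set.Ioo (0 : ℝ) 1, ∃ n₀ : ℕ, ∀ n : ℕ, n₀ ≤ n →
      ∃ (V : Type) (_ : Fintype V) (H : SimpleGraph V) (A B : Finset V),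
        Disjoint A B ∧ (∀ v : V, v ∈ A ∨ v ∈ B) ∧ A.card = n ∧ B.card = n ∧
        H.IsClique (A : Set V) ∧ H.IsClique (B : Set V) ∧
        (∀ v : V, (({w | w ≠ v ∧ ¬ H.Adj v w} : Set V).ncard : ℝ) ≤ ε * n) ∧
        ∀ t : ℕ, (1 + 2 * ε) * n ≤ (t : ℝ) → ¬ H.HasKMinor t := by
  rintro ε ⟨hε0, hε1⟩
  obtain ⟨K, s, hK, hbound⟩ := exists_eventually_badColoringBound_lt_one hε0 hε1
  obtain ⟨n₀, hn₀⟩ := eventually_atTop.mp (hbound.and (eventually_ge_atTop ⌈ε⁻¹⌉₊))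
  refine ⟨n₀, fun n hn => ?_⟩
  obtain ⟨hlt, hinv⟩ := hn₀ n hn
  have hεn : 1 ≤ ε * n := by
    calc 1 = ε * ε⁻¹ := (mul_inv_cancel₀ hε0.ne').symm
      _ ≤ ε * n := by gcongr; exact Nat.ceil_le.mp hinv
  obtain ⟨R, hrow, hcol, hR⟩ :=
    exists_forcesAnticompletePair_of_lt_one (⟨0, hK⟩ : Fin K) n _ s _ (by simpa using hlt)
  have hnonadj {k : ℕ} (hk : k < ⌊ε * n⌋₊ + 1) : (k : ℝ) ≤ ε * n :=
    (Nat.le_floor_iff (by positivity)).mp (Nat.lt_succ_iff.mp hk)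
  have hminor (t : ℕ) (ht : (1 + 2 * ε) * n ≤ (t : ℝ)) : n + ⌈ε * n⌉₊ ≤ t := by
    have := Nat.ceil_lt_add_one (by positivity : 0 ≤ ε * n)
    exact_mod_cast (by push_cast; linarith : ((n + ⌈ε * n⌉₊ : ℕ) : ℝ) ≤ t)
  refine ⟨Fin n ⊕ Fin n, inferInstance, twoCliqueGraph R, univ.map .inl, univ.map .inr,
    disjoint_map_inl_map_inr _ _, by rintro (a | b) <;> simp, by simp, by simp,
    by simpa using twoCliqueGraph_isClique_range_inl R,
    by simpa using twoCliqueGraph_isClique_range_inr R, ?_,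
    fun t ht => twoCliqueGraph_not_hasKMinor hR (by simpa using hminor t ht)
      (by simpa using hminor t ht)⟩
  rintro (a | b)
  · exact twoCliqueGraph_ncard_nonadj_inl R a ▸ hnonadj (hrow a)
  · exact twoCliqueGraph_ncard_nonadj_inr R b ▸ hnonadj (hcol b)
end

section
/- Let H be a graph with vertex set A ∪ B, |A| = |B| = n, where A and B are cliques, and suppose the bipartite complement G (with edges the non-adjacent pairs between A and B) has the property: for every X ⊆ A with |X| ≥ εn and every collection of ≥ εn pairwise disjoint non-empty subsets of B each of size at most ⌈1/ε⌉ there is a vertex of X adjacent in G to all vertices of one of the subsets, and symmetrically with A and B swapped. Then H contains no K_t-minor for any integer t ≥ (1+2ε)n. -/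
open Finset Function

theorem Finset.card_mul_le_card_of_pairwiseDisjoint {ι α : Type*} [DecidableEq α]
    {s : Finset ι} {W : ι → Finset α} {C : Finset α} {d : ℕ}
    (hW : (s : Set ι).PairwiseDisjoint W) (hC : ∀ i ∈ s, W i ⊆ C) (hd : ∀ i ∈ s, d ≤ #(W i)) :
    #s * d ≤ #C :=
  calc #s * d = ∑ _i ∈ s, d := by rw [sum_const, smul_eq_mul]
    _ ≤ ∑ i ∈ s, #(W i) := sum_le_sum hd
    _ = #(s.biUnion W) := (card_biUnion hW).symm
    _ ≤ #C := card_le_card (biUnion_subset.2 hC)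

theorem Finset.card_le_card_add_card_add_card {α : Type*} [DecidableEq α] {s t u v : Finset α}
    (h : s ⊆ t ∪ u ∪ v) : #s ≤ #t + #u + #v :=
  (card_le_card h).trans <| (card_union_le _ _).trans (Nat.add_le_add_right (card_union_le _ _) _)

def SimpleGraph.DominatesSmallSets {V : Type*} (G : SimpleGraph V) (ε : ℝ) (n : ℕ)
    (A B : Finset V) : Prop :=
  ∀ X : Finset V, X ⊆ A → ε * n ≤ (X.card : ℝ) →
    ∀ k : ℕ, ε * n ≤ (k : ℝ) → ∀ Y : Fin k → Finset V,
      (∀ j, Y j ⊆ B) → (∀ j, (Y j).Nonempty) → Pairwise (Function.onFun Disjoint Y) →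
      (∀ j, (Y j).card ≤ ⌈1 / ε⌉₊) →
      ∃ x ∈ X, ∃ j : Fin k, ∀ y ∈ Y j, G.Adj x y

namespace BranchSets

variable {ι V : Type*} [Fintype ι] [DecidableEq V] {W : ι → Finset V} {A B : Finset V} {n : ℕ}

def singletonsIn (W : ι → Finset V) (A : Finset V) : Finset ι :=
  {i | ∃ a ∈ A, W i = {a}}

def smallIn (W : ι → Finset V) (B : Finset V) (m : ℕ) : Finset ι :=
  {i | W i ⊆ B ∧ #(W i) ≤ m}

theorem card_biUnion_singletonsIn (hW : Pairwise (Disjoint on W)) :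
    #((singletonsIn W A).biUnion W) = #(singletonsIn W A) := by
  rw [card_biUnion (hW.set_pairwise _), card_eq_sum_ones]
  refine sum_congr rfl fun i hi ↦ ?_
  obtain ⟨a, -, ha⟩ := (mem_filter.1 hi).2
  rw [ha, card_singleton]

theorem biUnion_singletonsIn_subset : (singletonsIn W A).biUnion W ⊆ A :=
  biUnion_subset.2 fun i hi ↦ by
    obtain ⟨a, ha, hWa⟩ := (mem_filter.1 hi).2
    simpa [hWa] using ha

theorem false_of_le_card_singletonsIn {H G : SimpleGraph V} {ε : ℝ}
    (hdom : G.DominatesSmallSets ε n A B)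
    (hcompl : ∀ a ∈ A, ∀ b ∈ B, H.Adj a b → ¬ G.Adj a b)
    (hne : ∀ i, (W i).Nonempty) (hW : Pairwise (Disjoint on W))
    (hadj : Pairwise fun i j ↦ ∃ a ∈ W i, ∃ b ∈ W j, H.Adj a b)
    (hsingle : ε * n ≤ #(singletonsIn W A)) (hsmall : ε * n ≤ #(smallIn W B ⌈1 / ε⌉₊)) :
    False := by
  set e := (smallIn W B ⌈1 / ε⌉₊).equivFin.symm
  have hsmallSpec (j) : W (e j) ⊆ B ∧ #(W (e j)) ≤ ⌈1 / ε⌉₊ := (mem_filter.1 (e j).2).2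
  obtain ⟨x, hx, j, hxG⟩ := hdom _ biUnion_singletonsIn_subset
    (by rwa [card_biUnion_singletonsIn hW]) _ hsmall (fun j ↦ W (e j)) (fun j ↦ (hsmallSpec j).1)
    (fun j ↦ hne _) (fun j j' hjj' ↦ hW fun h ↦ hjj' (e.injective (Subtype.ext h)))
    (fun j ↦ (hsmallSpec j).2)
  obtain ⟨i, hi, hxi⟩ := mem_biUnion.1 hx
  obtain ⟨a, haA, hWa⟩ := (mem_filter.1 hi).2
  obtain rfl : x = a := by simpa [hWa] using hxi
  have hij : i ≠ e j := by
    rintro rfl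
    exact G.irrefl (hxG x hxi)
  obtain ⟨a', ha', b, hb, hab⟩ := hadj hij
  obtain rfl : a' = x := by simpa [hWa] using ha'
  exact hcompl a' haA b ((hsmallSpec j).1 hb) hab (hxG b hb)

variable [Fintype V]

theorem card_le_card_singletonsIn_add (hne : ∀ i, (W i).Nonempty)
    (hW : Pairwise (Disjoint on W)) (hAB : A ∪ B = univ) (hA : #A ≤ n) (hB : #B ≤ n) :
    Fintype.card ι ≤ #(singletonsIn W A) + #(singletonsIn W B) + n := by
  classical
  set large : Finset ι := {i | 2 ≤ #(W i)}
  have hlarge : #large * 2 ≤ #A + #B :=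
    calc #large * 2 ≤ #(univ : Finset V) :=
          card_mul_le_card_of_pairwiseDisjoint (hW.set_pairwise _) (fun _ _ ↦ subset_univ _)
            (fun _ hi ↦ (mem_filter.1 hi).2)
      _ ≤ #A + #B := hAB ▸ card_union_le A B
  have hcover : univ ⊆ singletonsIn W A ∪ singletonsIn W B ∪ large := by
    intro i _
    obtain hone | htwo : #(W i) = 1 ∨ 2 ≤ #(W i) := by have := (hne i).card_pos; omega
    · obtain ⟨a, ha⟩ := card_eq_one.1 hone
      have haAB : a ∈ A ∪ B := hAB ▸ mem_univ a
      rcases mem_union.1 haAB with haA | haB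
      · simp [singletonsIn, ha, haA]
      · simp [singletonsIn, ha, haB]
    · simp [large, htwo]
  have := card_le_card_add_card_add_card hcover
  rw [card_univ] at this
  omega

theorem card_filter_not_subset_le (hW : Pairwise (Disjoint on W)) (hAB : A ∪ B = univ) :
    #({i | ¬ W i ⊆ B} : Finset ι) ≤ #A := by
  simpa using card_mul_le_card_of_pairwiseDisjoint (d := 1) (W := fun i ↦ W i ∩ A)
    (fun i _ j _ hij ↦ (hW hij).mono inter_subset_left inter_subset_left)
    (fun _ _ ↦ inter_subset_right) fun i hi ↦ by
      obtain ⟨v, hvW, hvB⟩ := not_subset.1 (mem_filter.1 hi).2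
      have hvA : v ∈ A := (mem_union.1 (hAB ▸ mem_univ v)).resolve_right hvB
      exact card_pos.2 ⟨v, mem_inter.2 ⟨hvW, hvA⟩⟩

theorem le_card_smallIn {ε : ℝ} (hε : 0 < ε) (hW : Pairwise (Disjoint on W))
    (hAB : A ∪ B = univ) (hA : #A ≤ n) (hB : #B ≤ n) (ht : (1 + 2 * ε) * n ≤ Fintype.card ι) :
    ε * n ≤ #(smallIn W B ⌈1 / ε⌉₊) := by
  classical
  set m := ⌈1 / ε⌉₊
  set large : Finset ι := {i | W i ⊆ B ∧ m + 1 ≤ #(W i)}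
  have hlarge : #large * (m + 1) ≤ n :=
    (card_mul_le_card_of_pairwiseDisjoint (hW.set_pairwise _) (fun _ hi ↦ (mem_filter.1 hi).2.1)
      (fun _ hi ↦ (mem_filter.1 hi).2.2)).trans hB
  have hcover : univ ⊆ ({i | ¬ W i ⊆ B} : Finset ι) ∪ smallIn W B m ∪ large := by
    intro i _
    by_cases hiB : W i ⊆ B
    · rcases le_or_gt #(W i) m with h | h
      · simp [smallIn, hiB, h]
      · simp [large, hiB, h]
    · simp [hiB]
  have hcount : Fintype.card ι ≤ n + #(smallIn W B m) + #large := by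
    have := card_le_card_add_card_add_card hcover
    rw [card_univ] at this
    have := card_filter_not_subset_le hW hAB
    omega
  have hεm : 1 ≤ ε * m := by
    have := Nat.le_ceil (1 / ε)
    rwa [div_le_iff₀ hε, mul_comm] at this
  have hlargeR : (#large : ℝ) * (m + 1) ≤ n := by exact_mod_cast hlarge
  have hcountR : (Fintype.card ι : ℝ) ≤ n + #(smallIn W B m) + #large := by exact_mod_cast hcount
  nlinarith [Nat.cast_nonneg (α := ℝ) #large]

theorem le_card_singletonsIn_or {ε : ℝ} (hne : ∀ i, (W i).Nonempty)
    (hW : Pairwise (Disjoint on W)) (hAB : A ∪ B = univ) (hA : #A ≤ n) (hB : #B ≤ n)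
    (ht : (1 + 2 * ε) * n ≤ Fintype.card ι) :
    ε * n ≤ #(singletonsIn W A) ∨ ε * n ≤ #(singletonsIn W B) := by
  have := card_le_card_singletonsIn_add hne hW hAB hA hB
  have hcount : (Fintype.card ι : ℝ) ≤ #(singletonsIn W A) + #(singletonsIn W B) + n := by
    exact_mod_cast this
  by_contra! h
  linarith [h.1, h.2]

end BranchSets

open BranchSets

theorem no_minor_of_bipartite_property_general {V : Type*} [Fintype V] [DecidableEq V]
    (n : ℕ) (ε : ℝ) (hε : ε ∈ Set.Ioo (0 : ℝ) 1)
    (A B : Finset V) (hunion : A ∪ B = Finset.univ)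
    (hA : A.card = n) (hB : B.card = n)
    (H G : SimpleGraph V)
    (hcompl : ∀ a ∈ A, ∀ b ∈ B, (H.Adj a b ↔ ¬ G.Adj a b))
    (hprop1 : ∀ X : Finset V, X ⊆ A → ε * n ≤ (X.card : ℝ) →
      ∀ k : ℕ, ε * n ≤ (k : ℝ) → ∀ Y : Fin k → Finset V,
        (∀ j, Y j ⊆ B) → (∀ j, (Y j).Nonempty) → Pairwise (Function.onFun Disjoint Y) →
        (∀ j, (Y j).card ≤ ⌈1 / ε⌉₊) →
        ∃ x ∈ X, ∃ j : Fin k, ∀ y ∈ Y j, G.Adj x y)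
    (hprop2 : ∀ X : Finset V, X ⊆ B → ε * n ≤ (X.card : ℝ) →
      ∀ k : ℕ, ε * n ≤ (k : ℝ) → ∀ Y : Fin k → Finset V,
        (∀ j, Y j ⊆ A) → (∀ j, (Y j).Nonempty) → Pairwise (Function.onFun Disjoint Y) →
        (∀ j, (Y j).card ≤ ⌈1 / ε⌉₊) →
        ∃ x ∈ X, ∃ j : Fin k, ∀ y ∈ Y j, G.Adj x y) :
    ∀ t : ℕ, (1 + 2 * ε) * n ≤ (t : ℝ) → ¬ H.HasKMinor t := by
  classical
  rintro t ht ⟨Z, hne, hdisj, -, hadj⟩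
  set W : Fin t → Finset V := fun i ↦ (Z i).toFinset
  have hWne : ∀ i, (W i).Nonempty := by simpa [W] using hne
  have hW : Pairwise (Disjoint on W) := fun i j hij ↦ by simpa [W] using hdisj hij
  have hWadj : Pairwise fun i j ↦ ∃ a ∈ W i, ∃ b ∈ W j, H.Adj a b := by simpa [W] using hadj
  have htW : (1 + 2 * ε) * n ≤ Fintype.card (Fin t) := by simpa using ht
  have hunion' : B ∪ A = univ := union_comm A B ▸ hunion
  rcases le_card_singletonsIn_or hWne hW hunion hA.le hB.le htW with hsA | hsB
  · exact false_of_le_card_singletonsIn hprop1 (fun a ha b hb ↦ (hcompl a ha b hb).1) hWne hW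
      hWadj hsA (le_card_smallIn hε.1 hW hunion hA.le hB.le htW)
  · refine false_of_le_card_singletonsIn hprop2 (fun b hb a ha hba ↦ ?_) hWne hW hWadj hsB
      (le_card_smallIn hε.1 hW hunion' hB.le hA.le htW)
    rw [G.adj_comm]
    exact (hcompl a ha b hb).1 hba.symm

/-- Let `H` be a graph on `A ∪ B` with `|A| = |B| = n`, where `A` and `B` are cliques and the
adjacency between `A` and `B` is the complement of a bipartite graph `G`. If `G` has the
property that for every `X` on one side with `|X| ≥ εn` and every collection of at least `εn`
pairwise disjoint nonempty subsets of the other side, each of size at most `⌈1/ε⌉`, some vertex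
of `X` is `G`-adjacent to all of one of the subsets, then `H` has no `K_t`-minor for any
integer `t ≥ (1+2ε)n`. -/
theorem no_minor_of_bipartite_property {V : Type*} [Fintype V] [DecidableEq V]
    (n : ℕ) (hn : 0 < n) (ε : ℝ) (hε : ε ∈ Set.Ioo (0 : ℝ) 1)
    (A B : Finset V) (hAB : Disjoint A B) (hunion : A ∪ B = Finset.univ)
    (hA : A.card = n) (hB : B.card = n)
    (H G : SimpleGraph V)
    (hHA : H.IsClique (A : Set V)) (hHB : H.IsClique (B : Set V))
    (hGbip : ∀ u v, G.Adj u v → (u ∈ A ∧ v ∈ B) ∨ (u ∈ B ∧ v ∈ A))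
    (hcompl : ∀ a ∈ A, ∀ b ∈ B, (H.Adj a b ↔ ¬ G.Adj a b))
    (hprop1 : ∀ X : Finset V, X ⊆ A → ε * n ≤ (X.card : ℝ) →
      ∀ k : ℕ, ε * n ≤ (k : ℝ) → ∀ Y : Fin k → Finset V,
        (∀ j, Y j ⊆ B) → (∀ j, (Y j).Nonempty) → Pairwise (Function.onFun Disjoint Y) →
        (∀ j, (Y j).card ≤ ⌈1 / ε⌉₊) →
        ∃ x ∈ X, ∃ j : Fin k, ∀ y ∈ Y j, G.Adj x y)
    (hprop2 : ∀ X : Finset V, X ⊆ B → ε * n ≤ (X.card : ℝ) →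
      ∀ k : ℕ, ε * n ≤ (k : ℝ) → ∀ Y : Fin k → Finset V,
        (∀ j, Y j ⊆ A) → (∀ j, (Y j).Nonempty) → Pairwise (Function.onFun Disjoint Y) →
        (∀ j, (Y j).card ≤ ⌈1 / ε⌉₊) →
        ∃ x ∈ X, ∃ j : Fin k, ∀ y ∈ Y j, G.Adj x y) :
    ∀ t : ℕ, (1 + 2 * ε) * n ≤ (t : ℝ) → ¬ H.HasKMinor t :=
  no_minor_of_bipartite_property_general n ε hε A B hunion hA hB H G hcompl hprop1 hprop2
end
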